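/- For any D-table expression D of rank k and size n, the guarded-row set ⟦D⟧ produced by the reduction contains at most n^k rows, and consequently for a rank-k formula F the QFLIA formula ⟦F⟧ has size O(n^{k+1}). -/

import Mathlib

/-! All bounds are proved by structural induction. Beyond monotonicity of powers, the only
ingredient is `a ^ k + b ^ k ≤ (a + b) ^ k` for `k ≥ 1`, needed for unions and disjunctions
(hence the fact that a table has rank at least one). For the size of `⟦F⟧` the induction goes
through the strengthened invariant `redSize D + redCount D ≤ size D ^ (rank D + 1)` for tables,
together with `redSize F ≤ size F ^ (rank F + 1)` for formulas, so `C = 1` works. -/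

namespace DLogic

/-- Integer terms of the logic D (rows are flattened into tuples of integers;
`col d i` is de Bruijn-style access to column `i` of the row bound by the
`d`-th enclosing selection). -/
inductive Term : Type
  | var : ℕ → Term
  | col : ℕ → ℕ → Term
  | const : ℤ → Term
  | add : Term → Term → Term
  | mul : ℤ → Term → Term

mutual
  /-- Table expressions of D. -/
  inductive Table : Type
    | input : List (List Term) → Table
    | sel : Formula → Table → Table
    | prod : Table → Table → Table
    | union : Table → Table → Table
  /-- Formulas of D. -/
  inductive Formula : Type
    | le : Term → Term → Formula
    | nonempty : Table → Formula
    | not : Formula → Formula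
    | or : Formula → Formula → Formula
end

def Term.eval (env : ℕ → ℤ) (stk : List (List ℤ)) : Term → ℤ
  | .var n => env n
  | .col d i => (stk.getD d []).getD i 0
  | .const k => k
  | .add a b => a.eval env stk + b.eval env stk
  | .mul k t => k * t.eval env stk

mutual
  /-- The finite set (list) of rows denoted by a table expression. -/
  def Table.eval (env : ℕ → ℤ) (stk : List (List ℤ)) : Table → List (List ℤ)
    | .input rows => rows.map (fun r => r.map (fun t => t.eval env stk))
    | .sel F D => (D.eval env stk).filter (fun r => F.eval env (r :: stk))
    | .prod D₁ D₂ =>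
        (D₁.eval env stk).flatMap (fun r₁ => (D₂.eval env stk).map (fun r₂ => r₁ ++ r₂))
    | .union D₁ D₂ => D₁.eval env stk ++ D₂.eval env stk
  /-- Truth value of a D formula. -/
  def Formula.eval (env : ℕ → ℤ) (stk : List (List ℤ)) : Formula → Bool
    | .le t₁ t₂ => decide (t₁.eval env stk ≤ t₂.eval env stk)
    | .nonempty D => !(D.eval env stk).isEmpty
    | .not F => !(F.eval env stk)
    | .or F₁ F₂ => F₁.eval env stk || F₂.eval env stk
end

/-- Satisfiability of a D formula. -/
def Satisfiable (F : Formula) : Prop := ∃ env : ℕ → ℤ, F.eval env [] = true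

end DLogic

namespace DLogic

def Term.size : Term → ℕ
  | .var _ => 1
  | .col _ _ => 1
  | .const _ => 1
  | .add a b => a.size + b.size + 1
  | .mul _ t => t.size + 1

mutual
  def Table.size : Table → ℕ
    | .input rows => 1 + (rows.map (fun r => 1 + (r.map Term.size).sum)).sum
    | .sel F D => 1 + F.size + D.size
    | .prod D₁ D₂ => 1 + D₁.size + D₂.size
    | .union D₁ D₂ => 1 + D₁.size + D₂.size
  def Formula.size : Formula → ℕ
    | .le t₁ t₂ => 1 + t₁.size + t₂.size
    | .nonempty D => 1 + D.size
    | .not F => 1 + F.size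
    | .or F₁ F₂ => 1 + F₁.size + F₂.size
end

mutual
  def Table.rank : Table → ℕ
    | .input _ => 1
    | .sel F D => F.rank + D.rank
    | .prod D₁ D₂ => D₁.rank + D₂.rank
    | .union D₁ D₂ => max D₁.rank D₂.rank
  def Formula.rank : Formula → ℕ
    | .le _ _ => 0
    | .nonempty D => D.rank
    | .not F => F.rank
    | .or F₁ F₂ => max F₁.rank F₂.rank
end

/-- The number of guarded rows in the guarded-row set `⟦D⟧` of the
reduction. -/
def Table.redCount : Table → ℕ
  | .input rows => rows.length
  | .sel _ D => D.redCount
  | .prod D₁ D₂ => D₁.redCount * D₂.redCount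
  | .union D₁ D₂ => D₁.redCount + D₂.redCount

/- Size estimates for the output of the reduction: `Table.redSize D` bounds
the total size of the guarded rows of `⟦D⟧`, and `Formula.redSize F` the size
of the QFLIA formula `⟦F⟧`. -/
mutual
  def Table.redSize : Table → ℕ
    | .input rows => 1 + (rows.map (fun r => 1 + (r.map Term.size).sum)).sum
    | .sel F D => D.redSize + D.redCount * (F.redSize + 1)
    | .prod D₁ D₂ =>
        D₂.redCount * D₁.redSize + D₁.redCount * D₂.redSize +
          D₁.redCount * D₂.redCount
    | .union D₁ D₂ => D₁.redSize + D₂.redSize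
  def Formula.redSize : Formula → ℕ
    | .le t₁ t₂ => 1 + t₁.size + t₂.size
    | .nonempty D => D.redSize + D.redCount + 1
    | .not F => F.redSize + 1
    | .or F₁ F₂ => F₁.redSize + F₂.redSize + 1
end

end DLogic

theorem List.length_le_sum_map_one_add {α : Type*} (l : List α) (g : α → ℕ) :
    l.length ≤ (l.map fun x => 1 + g x).sum := by
  simp

theorem Nat.pow_add_le_add_pow {a b k : ℕ} (hk : k ≠ 0) : a ^ k + b ≤ (a + b) ^ k :=
  (Nat.add_le_add_left (Nat.le_self_pow hk b) _).trans (pow_add_pow_le a.zero_le b.zero_le hk)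

theorem Nat.pow_add_pow_le_add_pow_max {a b m n : ℕ} (ha : 1 ≤ a) (hb : 1 ≤ b)
    (h : max m n ≠ 0) : a ^ m + b ^ n ≤ (a + b) ^ max m n :=
  (Nat.add_le_add (Nat.pow_le_pow_right ha (le_max_left m n))
    (Nat.pow_le_pow_right hb (le_max_right m n))).trans (pow_add_pow_le a.zero_le b.zero_le h)

namespace DLogic

theorem Table.one_le_size (D : Table) : 1 ≤ D.size := by
  cases D <;> simp only [Table.size] <;> omega

theorem Formula.one_le_size (F : Formula) : 1 ≤ F.size := by
  cases F <;> simp only [Formula.size] <;> omega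

theorem Table.one_le_rank : (D : Table) → 1 ≤ D.rank
  | .input _ => le_rfl
  | .sel _ D => D.one_le_rank.trans (Nat.le_add_left _ _)
  | .prod D₁ _ => D₁.one_le_rank.trans (Nat.le_add_right _ _)
  | .union D₁ _ => D₁.one_le_rank.trans (le_max_left _ _)

theorem Table.redCount_le_size_pow_rank : (D : Table) → D.redCount ≤ D.size ^ D.rank
  | .input rows => by
      simp only [Table.redCount, Table.size, Table.rank, pow_one]
      have := List.length_le_sum_map_one_add rows fun r => (r.map Term.size).sum
      omega
  | .sel F D => by
      simp only [Table.redCount, Table.size, Table.rank]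
      exact D.redCount_le_size_pow_rank.trans
        (pow_le_pow (by omega) (by omega) (Nat.le_add_left _ _))
  | .prod D₁ D₂ => by
      simp only [Table.redCount, Table.size, Table.rank]
      calc D₁.redCount * D₂.redCount ≤ D₁.size ^ D₁.rank * D₂.size ^ D₂.rank :=
            Nat.mul_le_mul D₁.redCount_le_size_pow_rank D₂.redCount_le_size_pow_rank
        _ ≤ (1 + D₁.size + D₂.size) ^ D₁.rank * (1 + D₁.size + D₂.size) ^ D₂.rank :=
            Nat.mul_le_mul (Nat.pow_le_pow_left (by omega) _) (Nat.pow_le_pow_left (by omega) _)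
        _ = (1 + D₁.size + D₂.size) ^ (D₁.rank + D₂.rank) := (pow_add _ _ _).symm
  | .union D₁ D₂ => by
      simp only [Table.redCount, Table.size, Table.rank]
      have hrank : max D₁.rank D₂.rank ≠ 0 := by have := D₁.one_le_rank; omega
      calc D₁.redCount + D₂.redCount ≤ D₁.size ^ D₁.rank + D₂.size ^ D₂.rank :=
            Nat.add_le_add D₁.redCount_le_size_pow_rank D₂.redCount_le_size_pow_rank
        _ ≤ (D₁.size + D₂.size) ^ max D₁.rank D₂.rank :=
            Nat.pow_add_pow_le_add_pow_max D₁.one_le_size D₂.one_le_size hrank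
        _ ≤ (1 + D₁.size + D₂.size) ^ max D₁.rank D₂.rank := Nat.pow_le_pow_left (by omega) _

mutual

theorem Table.redSize_add_redCount_le : (D : Table) →
    D.redSize + D.redCount ≤ D.size ^ (D.rank + 1)
  | .input rows => by
      simp only [Table.redSize, Table.redCount, Table.size, Table.rank]
      have := List.length_le_sum_map_one_add rows fun r => (r.map Term.size).sum
      set s := (rows.map fun r => 1 + (r.map Term.size).sum).sum
      rw [show (1 + s) ^ (1 + 1) = 1 + s + s + s * s by ring]
      omega
  | .sel F D => by
      simp only [Table.redSize, Table.redCount, Table.size, Table.rank]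
      have hD := D.redSize_add_redCount_le
      have hF := F.redSize_le_size_pow
      have hc := D.redCount_le_size_pow_rank
      set c := D.redCount
      set d := D.size
      set N := 1 + F.size + d
      calc D.redSize + c * (F.redSize + 1) + c = (D.redSize + c) + c * (F.redSize + 1) := by ring
        _ ≤ d ^ (D.rank + 1) + d ^ D.rank * (F.size ^ (F.rank + 1) + 1) :=
            Nat.add_le_add hD (Nat.mul_le_mul hc (by omega))
        _ = d ^ D.rank * (F.size ^ (F.rank + 1) + (1 + d)) := by ring
        _ ≤ d ^ D.rank * (F.size + (1 + d)) ^ (F.rank + 1) :=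
            Nat.mul_le_mul_left _ (Nat.pow_add_le_add_pow (Nat.succ_ne_zero _))
        _ ≤ N ^ D.rank * N ^ (F.rank + 1) :=
            Nat.mul_le_mul (Nat.pow_le_pow_left (by omega) _) (le_of_eq (by ring))
        _ = N ^ (F.rank + D.rank + 1) := by ring
  | .prod D₁ D₂ => by
      simp only [Table.redSize, Table.redCount, Table.size, Table.rank]
      have h₁ := D₁.redSize_add_redCount_le
      have h₂ := D₂.redSize_add_redCount_le
      have c₁ := D₁.redCount_le_size_pow_rank
      have c₂ := D₂.redCount_le_size_pow_rank
      set a := D₁.size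
      set b := D₂.size
      calc D₂.redCount * D₁.redSize + D₁.redCount * D₂.redSize +
            D₁.redCount * D₂.redCount + D₁.redCount * D₂.redCount
          = D₂.redCount * (D₁.redSize + D₁.redCount) +
              D₁.redCount * (D₂.redSize + D₂.redCount) := by ring
        _ ≤ b ^ D₂.rank * a ^ (D₁.rank + 1) + a ^ D₁.rank * b ^ (D₂.rank + 1) :=
            Nat.add_le_add (Nat.mul_le_mul c₂ h₁) (Nat.mul_le_mul c₁ h₂)
        _ = a ^ D₁.rank * b ^ D₂.rank * (a + b) := by ring
        _ ≤ (1 + a + b) ^ D₁.rank * (1 + a + b) ^ D₂.rank * (1 + a + b) :=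
            Nat.mul_le_mul (Nat.mul_le_mul (Nat.pow_le_pow_left (by omega) _)
              (Nat.pow_le_pow_left (by omega) _)) (by omega)
        _ = (1 + a + b) ^ (D₁.rank + D₂.rank + 1) := by ring
  | .union D₁ D₂ => by
      simp only [Table.redSize, Table.redCount, Table.size, Table.rank]
      have h₁ := D₁.redSize_add_redCount_le
      have h₂ := D₂.redSize_add_redCount_le
      have hmax : max (D₁.rank + 1) (D₂.rank + 1) = max D₁.rank D₂.rank + 1 := by omega
      calc D₁.redSize + D₂.redSize + (D₁.redCount + D₂.redCount)
          ≤ D₁.size ^ (D₁.rank + 1) + D₂.size ^ (D₂.rank + 1) := by omega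
        _ ≤ (D₁.size + D₂.size) ^ (max D₁.rank D₂.rank + 1) := hmax ▸
            Nat.pow_add_pow_le_add_pow_max D₁.one_le_size D₂.one_le_size (by omega)
        _ ≤ (1 + D₁.size + D₂.size) ^ (max D₁.rank D₂.rank + 1) :=
            Nat.pow_le_pow_left (by omega) _

theorem Formula.redSize_le_size_pow : (F : Formula) → F.redSize ≤ F.size ^ (F.rank + 1)
  | .le _ _ => by simp only [Formula.redSize, Formula.size, Formula.rank, zero_add, pow_one, le_rfl]
  | .nonempty D => by
      simp only [Formula.redSize, Formula.size, Formula.rank]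
      have := D.redSize_add_redCount_le
      calc D.redSize + D.redCount + 1 ≤ D.size ^ (D.rank + 1) + 1 := by omega
        _ ≤ (1 + D.size) ^ (D.rank + 1) :=
            add_comm D.size 1 ▸ Nat.pow_add_le_add_pow (Nat.succ_ne_zero _)
  | .not F => by
      simp only [Formula.redSize, Formula.size, Formula.rank]
      calc F.redSize + 1 ≤ F.size ^ (F.rank + 1) + 1 := by
            have := F.redSize_le_size_pow; omega
        _ ≤ (1 + F.size) ^ (F.rank + 1) :=
            add_comm F.size 1 ▸ Nat.pow_add_le_add_pow (Nat.succ_ne_zero _)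
  | .or F₁ F₂ => by
      simp only [Formula.redSize, Formula.size, Formula.rank]
      have h₁ := F₁.redSize_le_size_pow
      have h₂ := F₂.redSize_le_size_pow
      have hmax : max (F₁.rank + 1) (F₂.rank + 1) = max F₁.rank F₂.rank + 1 := by omega
      calc F₁.redSize + F₂.redSize + 1 ≤ F₁.size ^ (F₁.rank + 1) + F₂.size ^ (F₂.rank + 1) + 1 := by
            omega
        _ ≤ (F₁.size + F₂.size) ^ (max F₁.rank F₂.rank + 1) + 1 := Nat.add_le_add_right (hmax ▸
            Nat.pow_add_pow_le_add_pow_max F₁.one_le_size F₂.one_le_size (by omega)) _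
        _ ≤ (F₁.size + F₂.size + 1) ^ (max F₁.rank F₂.rank + 1) :=
            Nat.pow_add_le_add_pow (Nat.succ_ne_zero _)
        _ = (1 + F₁.size + F₂.size) ^ (max F₁.rank F₂.rank + 1) := by ring

end

end DLogic

/-- A D table expression `D` of rank `k` and size `n`
yields at most `n ^ k` guarded rows under the reduction, and consequently for
a formula `F` of rank at most `k` the reduced QFLIA formula `⟦F⟧` has size
`O(n^(k+1))` in the size `n` of `F`. -/
theorem DLogic.reduction_size_bound :
    (∀ D : DLogic.Table, D.redCount ≤ D.size ^ D.rank) ∧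
    (∀ k : ℕ, ∃ C : ℕ, ∀ F : DLogic.Formula,
      F.rank ≤ k → F.redSize ≤ C * (F.size + 1) ^ (k + 1)) := by
  refine ⟨DLogic.Table.redCount_le_size_pow_rank, fun k => ⟨1, fun F hk => ?_⟩⟩
  rw [one_mul]
  exact F.redSize_le_size_pow.trans (pow_le_pow (Nat.le_succ _) (by omega) (by omega))
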